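/- Let W_1,...,W_{n+u−1} be finite-dimensional subspaces of a vector space V, let ℓ ≤ n, and define W_{n+u} = Σ_{i≤ℓ} (W_i ∩ W_[i+1,n+u−1]). Then for every subspace S ≤ W_i with i ≤ ℓ: h(S | W_{n+u}) ≤ h(S | W_[i+1,n+u−1]), where h(A|B) = dim(A+B) − dim(B). In particular the linear choice of virtual node (8) in the paper satisfies condition (7). -/

import Mathlib

open Module Finset

/-- Conditional dimension: `h(A|B) = dim(A+B) - dim(B)`. -/
noncomputable def condDim {F V : Type*} [Field F] [AddCommGroup V] [Module F V]
    (A B : Submodule F V) : ℤ :=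
  (finrank F ↥(A ⊔ B) : ℤ) - (finrank F ↥B : ℤ)

section condDim

variable {F V : Type*} [Field F] [AddCommGroup V] [Module F V]

theorem condDim_eq_finrank_sub_finrank_inf (A B : Submodule F V)
    [FiniteDimensional F A] [FiniteDimensional F B] :
    condDim A B = (finrank F A : ℤ) - finrank F ↥(A ⊓ B) := by
  have := Submodule.finrank_sup_add_finrank_inf_eq A B
  unfold condDim
  omega

theorem condDim_le_of_inf_le {A B C : Submodule F V}
    [FiniteDimensional F A] [FiniteDimensional F B] [FiniteDimensional F C]
    (h : A ⊓ B ≤ C) : condDim A C ≤ condDim A B := by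
  have hmono : finrank F ↥(A ⊓ B) ≤ finrank F ↥(A ⊓ C) :=
    Submodule.finrank_mono (le_inf inf_le_left h)
  rw [condDim_eq_finrank_sub_finrank_inf, condDim_eq_finrank_sub_finrank_inf]
  omega

end condDim

theorem stmt9_general {F V : Type*} [Field F] [AddCommGroup V] [Module F V]
    (W : ℕ → Submodule F V) (hfd : ∀ i, FiniteDimensional F ↥(W i))
    (n ℓ u : ℕ)
    (Wnu : Submodule F V)
    (hWnu : Wnu = (Finset.Icc 1 ℓ).sup
      (fun i => W i ⊓ (Finset.Icc (i+1) (n+u-1)).sup W)) :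
    ∀ i, 1 ≤ i → i ≤ ℓ → ∀ S : Submodule F V, S ≤ W i →
      condDim S Wnu ≤ condDim S ((Finset.Icc (i+1) (n+u-1)).sup W) := by
  intro i hi1 hiℓ S hS
  subst hWnu
  have := Submodule.finiteDimensional_of_le hS
  have hSB : S ⊓ (Finset.Icc (i+1) (n+u-1)).sup W ≤ _ :=
    (inf_le_inf_right _ hS).trans <|
      Finset.le_sup (f := fun i => W i ⊓ (Finset.Icc (i+1) (n+u-1)).sup W)
        (Finset.mem_Icc.mpr ⟨hi1, hiℓ⟩)
  exact condDim_le_of_inf_le hSB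

/-- the linear virtual node `W_{n+u} = Σ_{i≤ℓ} (W_i ∩ W_[i+1,n+u-1])`
satisfies `h(S | W_{n+u}) ≤ h(S | W_[i+1,n+u-1])` for every subspace `S ≤ W_i`, `i ≤ ℓ`. -/
theorem stmt9 {F V : Type*} [Field F] [AddCommGroup V] [Module F V]
    (W : ℕ → Submodule F V) (hfd : ∀ i, FiniteDimensional F ↥(W i))
    (n ℓ u : ℕ) (hln : ℓ ≤ n) (hu : 1 ≤ u)
    (Wnu : Submodule F V)
    (hWnu : Wnu = (Finset.Icc 1 ℓ).sup
      (fun i => W i ⊓ (Finset.Icc (i+1) (n+u-1)).sup W)) :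
    ∀ i, 1 ≤ i → i ≤ ℓ → ∀ S : Submodule F V, S ≤ W i →
      condDim S Wnu ≤ condDim S ((Finset.Icc (i+1) (n+u-1)).sup W) :=
  stmt9_general W hfd n ℓ u Wnu hWnu
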